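/- arXiv:1309.6095 — 2 statements merged into one kernel-verified Lean document; each statement's English description precedes it below -/
import Mathlib

section
/- Let G be a locally compact second countable group with a left Reiter sequence (F_m), and let g ↦ u_g be a bounded measurable function to a Hilbert space. Then there exists a two-sided Reiter sequence (F'_n) (namely F'_n = F_n * F_n^*) such that limsup_m ‖∫ u_g dF_m(g)‖² ≤ inf_n limsup_m ∫∫ ⟨u_g, u_{hg}⟩ dF'_n(h) dF_m(g). -/
open MeasureTheory Filter Topology
open scoped RealInnerProductSpace

/-- Total variation distance between two (finite) measures. -/
noncomputable def tvDist {G : Type*} [MeasurableSpace G] (μ ν : Measure G) : ENNReal :=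
  ⨆ (s : Set G) (_ : MeasurableSet s), (μ s - ν s) + (ν sᶜ - μ sᶜ)

/-- Left Reiter sequence. -/
def IsLeftReiter {G : Type*} [Group G] [MeasurableSpace G] (F : ℕ → Measure G) : Prop :=
  (∀ N, IsProbabilityMeasure (F N)) ∧
    ∀ h : Measure G, IsProbabilityMeasure h →
      Tendsto (fun N => tvDist ((h.mconv (F N))) (F N)) atTop (𝓝 0)

/-- Right Reiter sequence. -/
def IsRightReiter {G : Type*} [Group G] [MeasurableSpace G] (F : ℕ → Measure G) : Prop :=
  (∀ N, IsProbabilityMeasure (F N)) ∧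
    ∀ h : Measure G, IsProbabilityMeasure h →
      Tendsto (fun N => tvDist (((F N).mconv h)) (F N)) atTop (𝓝 0)

/-- The adjoint measure `μ^*`, the pushforward of `μ` under inversion. -/
noncomputable def adjointMeasure {G : Type*} [Group G] [MeasurableSpace G] (μ : Measure G) :
    Measure G := Measure.map (fun g : G => g⁻¹) μ

/-!
Right convolution by probability measures contracts the total variation distance, so
`F'_n = F_n ∗ F_n^*` is again a left Reiter sequence; since `F'_n` is invariant under
inversion, and inversion exchanges left and right convolution, it is a right Reiter sequence.

For the inequality, asymptotic invariance of `(F_m)` under `F_n` replaces `∫ u dF_m` by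
`∫ u d(F_n ∗ F_m) = ∫ ψ dF_m`, `ψ g = ∫ u(lg) dF_n(l)`, at a cost bounded by the total
variation distance. Jensen and Fubini bound `‖∫ ψ dF_m‖²` by the `F_n × F_n`-average of the
correlations `∫ ⟪u(lg), u(kg)⟫ dF_m(g)`. Asymptotic invariance under the translation by `k`
(with dominated convergence in `(l, k)`) turns these into `∫ ⟪u g, u(lk⁻¹g)⟫ dF_m(g)`, and
`lk⁻¹` is distributed according to `F'_n`.
-/

lemma limsup_le_limsup_of_le_add {ι : Type*} {f : Filter ι} {a c e : ι → ℝ}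
    (hc : IsBoundedUnder (· ≤ ·) f c) (ha : IsCoboundedUnder (· ≤ ·) f a)
    (he : Tendsto e f (𝓝 0)) (h : ∀ i, a i ≤ c i + e i) : limsup a f ≤ limsup c f := by
  refine le_of_forall_pos_le_add fun ε hε => limsup_le_of_le ha ?_
  filter_upwards [eventually_lt_of_limsup_lt (lt_add_of_pos_right _ (half_pos hε)) hc,
    he.eventually_lt_const (half_pos hε)] with i hci hei
  linarith [h i]

lemma norm_sq_le_norm_sq_add_of_norm_le {E : Type*} [SeminormedAddCommGroup E] {a b : E} {C : ℝ}
    (ha : ‖a‖ ≤ C) (hb : ‖b‖ ≤ C) : ‖a‖ ^ 2 ≤ ‖b‖ ^ 2 + 2 * C * ‖b - a‖ := by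
  have hab : ‖a‖ - ‖b‖ ≤ ‖b - a‖ := norm_sub_rev a b ▸ norm_sub_norm_le a b
  nlinarith [mul_le_mul_of_nonneg_right hab (add_nonneg (norm_nonneg a) (norm_nonneg b)),
    mul_le_mul_of_nonneg_left (add_le_add ha hb) (norm_nonneg (b - a))]

section Integral

variable {α E : Type*} [MeasurableSpace α] [NormedAddCommGroup E] [NormedSpace ℝ E]
  {μ : Measure α} [IsProbabilityMeasure μ] {f : α → E} {C : ℝ}

lemma norm_integral_le_of_forall_norm_le (hfC : ∀ x, ‖f x‖ ≤ C) : ‖∫ x, f x ∂μ‖ ≤ C := by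
  simpa using norm_integral_le_of_norm_le_const (μ := μ) (ae_of_all _ hfC)

lemma norm_integral_sq_le_integral_norm_sq (hf : AEStronglyMeasurable f μ)
    (hfC : ∀ x, ‖f x‖ ≤ C) : ‖∫ x, f x ∂μ‖ ^ 2 ≤ ∫ x, ‖f x‖ ^ 2 ∂μ := by
  have hfi : Integrable (fun x => ‖f x‖) μ :=
    .of_bound hf.norm C (ae_of_all _ fun x => by simpa using hfC x)
  have hf2i : Integrable (fun x => ‖f x‖ ^ 2) μ :=
    .of_bound (hf.norm.pow 2) (C ^ 2) (ae_of_all _ fun x => by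
      simpa using pow_le_pow_left₀ (norm_nonneg _) (hfC x) 2)
  calc ‖∫ x, f x ∂μ‖ ^ 2 ≤ (∫ x, ‖f x‖ ∂μ) ^ 2 :=
        pow_le_pow_left₀ (norm_nonneg _) (norm_integral_le_integral_norm f) 2
    _ ≤ ∫ x, ‖f x‖ ^ 2 ∂μ :=
        (even_two.convexOn_pow).map_integral_le (continuous_pow 2).continuousOn isClosed_univ
          (ae_of_all _ fun _ => Set.mem_univ _) hfi hf2i

end Integral

section Inner

variable {α H : Type*} [NormedAddCommGroup H] [InnerProductSpace ℝ H] {v : α → H} {C : ℝ}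

lemma norm_inner_le_of_forall_norm_le (hvC : ∀ x, ‖v x‖ ≤ C) (x y : α) :
    ‖⟪v x, v y⟫‖ ≤ C ^ 2 :=
  (norm_inner_le_norm _ _).trans <| by
    rw [sq]; exact mul_le_mul (hvC x) (hvC y) (norm_nonneg _) ((norm_nonneg _).trans (hvC x))

lemma norm_integral_sq_eq_integral_inner [MeasurableSpace α] [CompleteSpace H] {μ : Measure α}
    [IsFiniteMeasure μ] (hv : StronglyMeasurable v) (hvC : ∀ x, ‖v x‖ ≤ C) :
    ‖∫ x, v x ∂μ‖ ^ 2 = ∫ p, ⟪v p.1, v p.2⟫ ∂(μ.prod μ) := by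
  have hvi : Integrable v μ := .of_bound hv.aestronglyMeasurable C (ae_of_all _ hvC)
  have hinner : StronglyMeasurable fun p : α × α => ⟪v p.1, v p.2⟫ :=
    (hv.comp_measurable measurable_fst).inner (hv.comp_measurable measurable_snd)
  rw [← real_inner_self_eq_norm_sq, integral_prod _ (.of_bound hinner.aestronglyMeasurable (C ^ 2)
    (ae_of_all _ fun p => norm_inner_le_of_forall_norm_le hvC p.1 p.2)), ← integral_inner hvi]
  refine integral_congr_ae (ae_of_all _ fun x => ?_)
  dsimp only
  rw [real_inner_comm, ← integral_inner hvi]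

end Inner

section TotalVariation

variable {α : Type*} [MeasurableSpace α]

lemma le_tvDist (μ ν : Measure α) {s : Set α} (hs : MeasurableSet s) :
    (μ s - ν s) + (ν sᶜ - μ sᶜ) ≤ tvDist μ ν :=
  le_iSup₂ (f := fun s (_ : MeasurableSet s) => (μ s - ν s) + (ν sᶜ - μ sᶜ)) s hs

lemma tvDist_ne_top (μ ν : Measure α) [IsFiniteMeasure μ] [IsFiniteMeasure ν] :
    tvDist μ ν ≠ ⊤ :=
  ne_top_of_le_ne_top (ENNReal.add_ne_top.2 ⟨measure_ne_top μ .univ, measure_ne_top ν .univ⟩) <|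
    iSup₂_le fun s _ => add_le_add (tsub_le_self.trans (measure_mono (Set.subset_univ s)))
      (tsub_le_self.trans (measure_mono (Set.subset_univ sᶜ)))

lemma tvDist_map_le {β : Type*} [MeasurableSpace β] (μ ν : Measure α) {f : α → β}
    (hf : Measurable f) : tvDist (μ.map f) (ν.map f) ≤ tvDist μ ν := by
  refine iSup₂_le fun s hs => ?_
  simp only [Measure.map_apply hf hs, Measure.map_apply hf hs.compl, Set.preimage_compl]
  exact le_tvDist μ ν (hf hs)

variable {E : Type*} [NormedAddCommGroup E] [NormedSpace ℝ E] {f : α → E} {C : ℝ}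

lemma norm_integral_sub_integral_le_of_le {κ₁ κ₂ : Measure α} [IsFiniteMeasure κ₁] (h : κ₂ ≤ κ₁)
    (hf : AEStronglyMeasurable f κ₁) (hfC : ∀ x, ‖f x‖ ≤ C) :
    ‖∫ x, f x ∂κ₁ - ∫ x, f x ∂κ₂‖ ≤ C * (κ₁ .univ - κ₂ .univ).toReal := by
  have : IsFiniteMeasure κ₂ := isFiniteMeasure_of_le κ₁ h
  have hint : ∀ κ : Measure α, κ ≤ κ₁ → Integrable f κ := fun κ hκ =>
    have : IsFiniteMeasure κ := isFiniteMeasure_of_le κ₁ hκ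
    .of_bound (hf.mono_measure hκ) C (ae_of_all _ hfC)
  have hsplit : ∫ x, f x ∂κ₁ = ∫ x, f x ∂(κ₁ - κ₂) + ∫ x, f x ∂κ₂ := by
    conv_lhs => rw [← Measure.sub_add_cancel_of_le h]
    exact integral_add_measure (hint _ Measure.sub_le) (hint _ h)
  rw [hsplit, add_sub_cancel_right, ← Measure.sub_apply .univ h]
  have : IsFiniteMeasure (κ₁ - κ₂) := isFiniteMeasure_of_le κ₁ Measure.sub_le
  simpa [measureReal_def] using norm_integral_le_of_norm_le_const (μ := κ₁ - κ₂) (ae_of_all _ hfC)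

lemma norm_integral_sub_integral_le_mul_tvDist (μ ν : Measure α) [IsFiniteMeasure μ]
    [IsFiniteMeasure ν] (hf : StronglyMeasurable f) (hfC : ∀ x, ‖f x‖ ≤ C) :
    ‖∫ x, f x ∂μ - ∫ x, f x ∂ν‖ ≤ C * (tvDist μ ν).toReal := by
  obtain hα | ⟨⟨x⟩⟩ := isEmpty_or_nonempty α
  · simp [Subsingleton.elim μ 0, Subsingleton.elim ν 0, tvDist]
  have hC : 0 ≤ C := (norm_nonneg _).trans (hfC x)
  obtain ⟨s, hs, hνμ, hμν⟩ := hahn_decomposition μ ν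
  have hs_le : ν.restrict s ≤ μ.restrict s := Measure.le_iff.2 fun t ht => by
    simpa only [Measure.restrict_apply ht] using hνμ _ (ht.inter hs) Set.inter_subset_right
  have hsc_le : μ.restrict sᶜ ≤ ν.restrict sᶜ := Measure.le_iff.2 fun t ht => by
    simpa only [Measure.restrict_apply ht] using hμν _ (ht.inter hs.compl) Set.inter_subset_right
  have hint : ∀ κ : Measure α, [IsFiniteMeasure κ] → Integrable f κ := fun κ _ =>
    .of_bound hf.aestronglyMeasurable C (ae_of_all _ hfC)
  calc ‖∫ x, f x ∂μ - ∫ x, f x ∂ν‖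
      = ‖(∫ x in s, f x ∂μ - ∫ x in s, f x ∂ν) - (∫ x in sᶜ, f x ∂ν - ∫ x in sᶜ, f x ∂μ)‖ := by
        rw [← integral_add_compl hs (hint μ), ← integral_add_compl hs (hint ν)]; abel_nf
    _ ≤ C * (μ s - ν s).toReal + C * (ν sᶜ - μ sᶜ).toReal := by
        refine (norm_sub_le _ _).trans (add_le_add ?_ ?_)
        · simpa using norm_integral_sub_integral_le_of_le hs_le
            hf.aestronglyMeasurable hfC
        · simpa using norm_integral_sub_integral_le_of_le hsc_le
            hf.aestronglyMeasurable hfC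
    _ ≤ C * (tvDist μ ν).toReal := by
        rw [← mul_add, ← ENNReal.toReal_add (by finiteness) (by finiteness)]
        exact mul_le_mul_of_nonneg_left
          (ENNReal.toReal_mono (tvDist_ne_top μ ν) (le_tvDist μ ν hs)) hC

end TotalVariation

section Convolution

variable {G : Type*} [Group G] [MeasurableSpace G]

section Adjoint

variable [MeasurableInv G]

instance (μ : Measure G) [IsProbabilityMeasure μ] : IsProbabilityMeasure (adjointMeasure μ) :=
  Measure.isProbabilityMeasure_map measurable_inv.aemeasurable

instance (μ : Measure G) [SFinite μ] : SFinite (adjointMeasure μ) :=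
  Measure.inv.instSFinite μ

lemma adjointMeasure_adjointMeasure (μ : Measure G) :
    adjointMeasure (adjointMeasure μ) = μ :=
  Measure.inv_inv μ

lemma lintegral_adjointMeasure (μ : Measure G) {f : G → ENNReal} (hf : Measurable f) :
    ∫⁻ x, f x ∂(adjointMeasure μ) = ∫⁻ x, f x⁻¹ ∂μ :=
  lintegral_map hf measurable_inv

variable [MeasurableMul₂ G]

lemma adjointMeasure_mconv (μ ν : Measure G) [SFinite μ] [SFinite ν] :
    adjointMeasure (μ.mconv ν) = (adjointMeasure ν).mconv (adjointMeasure μ) := by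
  refine Measure.ext_of_lintegral _ fun f hf => ?_
  rw [lintegral_adjointMeasure _ hf, Measure.lintegral_mconv (f := fun x => f x⁻¹) (by fun_prop),
    Measure.lintegral_mconv hf, lintegral_adjointMeasure _ (by fun_prop),
    lintegral_lintegral_swap (by fun_prop)]
  refine lintegral_congr fun y => ?_
  rw [lintegral_adjointMeasure _ (by fun_prop)]
  simp_rw [mul_inv_rev]

lemma adjointMeasure_mconv_adjointMeasure (μ : Measure G) [SFinite μ] :
    adjointMeasure (μ.mconv (adjointMeasure μ)) = μ.mconv (adjointMeasure μ) := by
  rw [adjointMeasure_mconv, adjointMeasure_adjointMeasure]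

lemma integral_mconv_adjointMeasure {E : Type*} [NormedAddCommGroup E] [NormedSpace ℝ E]
    (μ : Measure G) [SFinite μ] {f : G → E} (hf : StronglyMeasurable f) :
    ∫ x, f x ∂(μ.mconv (adjointMeasure μ)) = ∫ p, f (p.1 * p.2⁻¹) ∂(μ.prod μ) := by
  rw [Measure.mconv, adjointMeasure, ← Measure.map_id (μ := μ), Measure.map_prod_map _ _
    measurable_id measurable_inv, Measure.map_id, Measure.map_map (by fun_prop) (by fun_prop),
    integral_map (by fun_prop) hf.aestronglyMeasurable]
  rfl

end Adjoint

variable [MeasurableMul₂ G]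

lemma mconv_apply_eq_lintegral (μ ν : Measure G) [SFinite μ] [SFinite ν] {s : Set G}
    (hs : MeasurableSet s) : (μ.mconv ν) s = ∫⁻ y, μ ((· * y) ⁻¹' s) ∂ν := by
  rw [Measure.mconv, Measure.map_apply measurable_mul hs,
    Measure.prod_apply_symm (measurable_mul hs)]
  rfl

lemma measurable_measure_preimage_mul_right (μ : Measure G) [SFinite μ] {s : Set G}
    (hs : MeasurableSet s) : Measurable fun y => μ ((· * y) ⁻¹' s) :=
  measurable_measure_prodMk_right (measurable_mul hs)

lemma tvDist_mconv_le (μ ν κ : Measure G) [SFinite μ] [SFinite ν] [IsProbabilityMeasure κ] :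
    tvDist (μ.mconv κ) (ν.mconv κ) ≤ tvDist μ ν := by
  refine iSup₂_le fun s hs => ?_
  simp only [mconv_apply_eq_lintegral _ _ hs, mconv_apply_eq_lintegral _ _ hs.compl]
  calc _ ≤ (∫⁻ y, μ ((· * y) ⁻¹' s) - ν ((· * y) ⁻¹' s) ∂κ)
        + ∫⁻ y, ν ((· * y) ⁻¹' sᶜ) - μ ((· * y) ⁻¹' sᶜ) ∂κ :=
        add_le_add (lintegral_sub_le _ _ (measurable_measure_preimage_mul_right ν hs))
          (lintegral_sub_le _ _ (measurable_measure_preimage_mul_right μ hs.compl))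
    _ = ∫⁻ y, (μ ((· * y) ⁻¹' s) - ν ((· * y) ⁻¹' s))
        + (ν ((· * y) ⁻¹' s)ᶜ - μ ((· * y) ⁻¹' s)ᶜ) ∂κ :=
        (lintegral_add_left ((measurable_measure_preimage_mul_right μ hs).sub
          (measurable_measure_preimage_mul_right ν hs)) _).symm
    _ ≤ ∫⁻ _, tvDist μ ν ∂κ := lintegral_mono fun y => le_tvDist μ ν (measurable_mul_const y hs)
    _ = tvDist μ ν := by simp

end Convolution

namespace IsLeftReiter

variable {G : Type*} [Group G] [MeasurableSpace G] {F : ℕ → Measure G}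

lemma mconv_right [MeasurableMul₂ G] (hF : IsLeftReiter F) {K : ℕ → Measure G}
    (hK : ∀ n, IsProbabilityMeasure (K n)) :
    IsLeftReiter fun n => (F n).mconv (K n) := by
  have := hF.1
  refine ⟨fun n => inferInstance, fun h hh => ?_⟩
  refine tendsto_of_tendsto_of_tendsto_of_le_of_le tendsto_const_nhds (hF.2 h hh)
    (fun _ => zero_le) fun n => ?_
  rw [← Measure.mconv_assoc]
  exact tvDist_mconv_le _ _ _

lemma isRightReiter_of_adjointMeasure_eq [MeasurableMul₂ G] [MeasurableInv G] (hF : IsLeftReiter F)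
    (hadj : ∀ n, adjointMeasure (F n) = F n) : IsRightReiter F := by
  have := hF.1
  refine ⟨hF.1, fun h hh => ?_⟩
  refine tendsto_of_tendsto_of_tendsto_of_le_of_le tendsto_const_nhds
    (hF.2 (adjointMeasure h) inferInstance) (fun _ => zero_le) fun n => ?_
  calc tvDist ((F n).mconv h) (F n)
      = tvDist (adjointMeasure ((adjointMeasure h).mconv (F n))) (adjointMeasure (F n)) := by
        rw [adjointMeasure_mconv, adjointMeasure_adjointMeasure, hadj]
    _ ≤ tvDist ((adjointMeasure h).mconv (F n)) (F n) := tvDist_map_le _ _ measurable_inv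

lemma tendsto_integral_mconv_sub {E : Type*} [NormedAddCommGroup E] [NormedSpace ℝ E]
    (hF : IsLeftReiter F) (h : Measure G) [IsProbabilityMeasure h] {f : G → E}
    (hf : StronglyMeasurable f) {C : ℝ} (hfC : ∀ x, ‖f x‖ ≤ C) :
    Tendsto (fun m => ∫ x, f x ∂(h.mconv (F m)) - ∫ x, f x ∂(F m)) atTop (𝓝 0) := by
  have := hF.1
  have htv : Tendsto (fun m => C * (tvDist (h.mconv (F m)) (F m)).toReal) atTop (𝓝 0) := by
    simpa using
      ((ENNReal.tendsto_toReal ENNReal.zero_ne_top).comp (hF.2 h inferInstance)).const_mul C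
  exact squeeze_zero_norm (fun m => norm_integral_sub_integral_le_mul_tvDist _ _ hf hfC) htv

end IsLeftReiter

section VanDerCorput

variable {G H : Type*} [Group G] [MeasurableSpace G] [NormedAddCommGroup H]
  [InnerProductSpace ℝ H] {u : G → H} {C : ℝ}

noncomputable def correlation (u : G → H) (μ : Measure G) (l k : G) : ℝ :=
  ∫ g, ⟪u (l * g), u (k * g)⟫ ∂μ

lemma norm_correlation_le (μ : Measure G) [IsProbabilityMeasure μ] (huC : ∀ g, ‖u g‖ ≤ C)
    (l k : G) : ‖correlation u μ l k‖ ≤ C ^ 2 :=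
  norm_integral_le_of_forall_norm_le fun _ => norm_inner_le_of_forall_norm_le huC _ _

lemma stronglyMeasurable_correlation [MeasurableMul₂ G] (hu : StronglyMeasurable u)
    (μ : Measure G) [SFinite μ] : StronglyMeasurable fun p : G × G => correlation u μ p.1 p.2 :=
  StronglyMeasurable.integral_prod_right' (f := fun q : (G × G) × G =>
    ⟪u (q.1.1 * q.2), u (q.1.2 * q.2)⟫)
    ((hu.comp_measurable (by fun_prop)).inner (hu.comp_measurable (by fun_prop)))

lemma correlation_eq_integral_dirac_mconv [MeasurableMul₂ G] (hu : StronglyMeasurable u)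
    (μ : Measure G) [SFinite μ] (l k : G) :
    correlation u μ l k = ∫ x, ⟪u (l * k⁻¹ * x), u x⟫ ∂((Measure.dirac k).mconv μ) := by
  rw [Measure.dirac_mconv, integral_map (by fun_prop)
    ((hu.comp_measurable (by fun_prop)).inner hu).aestronglyMeasurable]
  simp only [correlation, mul_assoc, inv_mul_cancel_left]

lemma IsLeftReiter.tendsto_correlation_sub [MeasurableMul₂ G] {F : ℕ → Measure G}
    (hF : IsLeftReiter F) (hu : StronglyMeasurable u) (huC : ∀ g, ‖u g‖ ≤ C) (l k : G) :
    Tendsto (fun m => correlation u (F m) l k - correlation u (F m) (l * k⁻¹) 1) atTop (𝓝 0) := by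
  have := hF.1
  refine (hF.tendsto_integral_mconv_sub (Measure.dirac k)
    ((hu.comp_measurable (measurable_const_mul (l * k⁻¹))).inner hu)
    fun _ => norm_inner_le_of_forall_norm_le huC _ _).congr fun m => ?_
  rw [correlation_eq_integral_dirac_mconv hu]
  simp only [correlation, one_mul]

lemma stronglyMeasurable_correlation_mul_inv [MeasurableMul₂ G] [MeasurableInv G]
    (hu : StronglyMeasurable u) (μ : Measure G) [SFinite μ] :
    StronglyMeasurable fun p : G × G => correlation u μ (p.1 * p.2⁻¹) 1 :=
  (stronglyMeasurable_correlation hu μ).comp_measurable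
    (g := fun p : G × G => (p.1 * p.2⁻¹, (1 : G))) (by fun_prop)

lemma IsLeftReiter.tendsto_integral_abs_correlation_sub [MeasurableMul₂ G] [MeasurableInv G]
    {F : ℕ → Measure G} (hF : IsLeftReiter F) (hu : StronglyMeasurable u)
    (huC : ∀ g, ‖u g‖ ≤ C) (P : Measure G) [IsProbabilityMeasure P] :
    Tendsto (fun m => ∫ p, |correlation u (F m) p.1 p.2 - correlation u (F m) (p.1 * p.2⁻¹) 1|
      ∂(P.prod P)) atTop (𝓝 0) := by
  have := hF.1
  have hbound : ∀ m (p : G × G),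
      ‖|correlation u (F m) p.1 p.2 - correlation u (F m) (p.1 * p.2⁻¹) 1|‖ ≤ 2 * C ^ 2 :=
    fun m p => by
      rw [norm_abs_eq_norm, two_mul]
      exact (norm_sub_le _ _).trans
        (add_le_add (norm_correlation_le _ huC _ _) (norm_correlation_le _ huC _ _))
  rw [← integral_zero (G × G) ℝ (μ := P.prod P)]
  exact tendsto_integral_of_dominated_convergence (fun _ => 2 * C ^ 2)
    (fun m => ((stronglyMeasurable_correlation hu (F m)).sub
      (stronglyMeasurable_correlation_mul_inv hu (F m))).aestronglyMeasurable.norm)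
    (integrable_const _) (fun m => ae_of_all _ (hbound m))
    (ae_of_all _ fun p => by simpa using (hF.tendsto_correlation_sub hu huC p.1 p.2).abs)

variable [MeasurableMul₂ G]

lemma norm_integral_mconv_sq_le_integral_correlation [CompleteSpace H] (hu : StronglyMeasurable u)
    (huC : ∀ g, ‖u g‖ ≤ C) (P μ : Measure G) [IsProbabilityMeasure P] [IsProbabilityMeasure μ] :
    ‖∫ g, u g ∂(P.mconv μ)‖ ^ 2 ≤ ∫ p, correlation u μ p.1 p.2 ∂(P.prod P) := by
  have hψm : StronglyMeasurable fun g => ∫ l, u (l * g) ∂P :=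
    (hu.comp_measurable (measurable_snd.mul measurable_fst)).integral_prod_right'
  have hψC : ∀ g, ‖∫ l, u (l * g) ∂P‖ ≤ C := fun _ =>
    norm_integral_le_of_forall_norm_le fun _ => huC _
  have hconv : ∫ g, u g ∂(P.mconv μ) = ∫ g, ∫ l, u (l * g) ∂P ∂μ := by
    rw [integral_mconv (.of_bound hu.aestronglyMeasurable C (ae_of_all _ huC)),
      integral_integral_swap (f := fun l g => u (l * g)) (.of_bound
        (hu.comp_measurable measurable_mul).aestronglyMeasurable C (ae_of_all _ fun _ => huC _))]
  calc ‖∫ g, u g ∂(P.mconv μ)‖ ^ 2 ≤ ∫ g, ‖∫ l, u (l * g) ∂P‖ ^ 2 ∂μ := by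
        rw [hconv]; exact norm_integral_sq_le_integral_norm_sq hψm.aestronglyMeasurable hψC
    _ = ∫ g, ∫ p, ⟪u (p.1 * g), u (p.2 * g)⟫ ∂(P.prod P) ∂μ := by
        refine integral_congr_ae (ae_of_all _ fun g => ?_)
        exact norm_integral_sq_eq_integral_inner (v := fun l => u (l * g))
          (hu.comp_measurable (measurable_mul_const g)) fun _ => huC _
    _ = ∫ p, correlation u μ p.1 p.2 ∂(P.prod P) := by
        refine integral_integral_swap (.of_bound ?_ (C ^ 2) (ae_of_all _ fun _ =>
          norm_inner_le_of_forall_norm_le huC _ _))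
        exact ((hu.comp_measurable (by fun_prop)).inner
          (hu.comp_measurable (by fun_prop))).aestronglyMeasurable

lemma integral_integral_inner_mconv_adjointMeasure [MeasurableInv G] (hu : StronglyMeasurable u)
    (huC : ∀ g, ‖u g‖ ≤ C) (P μ : Measure G) [IsProbabilityMeasure P] [IsProbabilityMeasure μ] :
    ∫ g, ∫ h, ⟪u g, u (h * g)⟫ ∂(P.mconv (adjointMeasure P)) ∂μ
      = ∫ p, correlation u μ (p.1 * p.2⁻¹) 1 ∂(P.prod P) := by
  have hinner : ∀ g, ∫ h, ⟪u g, u (h * g)⟫ ∂(P.mconv (adjointMeasure P))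
      = ∫ p, ⟪u g, u (p.1 * p.2⁻¹ * g)⟫ ∂(P.prod P) := fun g =>
    integral_mconv_adjointMeasure P
      (stronglyMeasurable_const.inner (hu.comp_measurable (measurable_mul_const g)))
  simp only [hinner, correlation, one_mul]
  refine (integral_integral_swap (.of_bound ?_ (C ^ 2) (ae_of_all _ fun _ =>
    norm_inner_le_of_forall_norm_le huC _ _))).trans ?_
  · exact ((hu.comp_measurable (by fun_prop)).inner
      (hu.comp_measurable (by fun_prop))).aestronglyMeasurable
  · simp only [real_inner_comm]

theorem van_der_corput_inequality [MeasurableInv G] [CompleteSpace H] (hu : StronglyMeasurable u)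
    (huC : ∀ g, ‖u g‖ ≤ C) (P μ : Measure G) [IsProbabilityMeasure P] [IsProbabilityMeasure μ] :
    ‖∫ g, u g ∂μ‖ ^ 2 ≤ ∫ g, ∫ h, ⟪u g, u (h * g)⟫ ∂(P.mconv (adjointMeasure P)) ∂μ
      + (∫ p, |correlation u μ p.1 p.2 - correlation u μ (p.1 * p.2⁻¹) 1| ∂(P.prod P)
        + 2 * C * ‖∫ g, u g ∂(P.mconv μ) - ∫ g, u g ∂μ‖) := by
  have hcorr : Integrable (fun p : G × G => correlation u μ p.1 p.2) (P.prod P) :=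
    .of_bound (stronglyMeasurable_correlation hu μ).aestronglyMeasurable _
      (ae_of_all _ fun _ => norm_correlation_le μ huC _ _)
  have hcorr' : Integrable (fun p : G × G => correlation u μ (p.1 * p.2⁻¹) 1) (P.prod P) :=
    .of_bound (stronglyMeasurable_correlation_mul_inv hu μ).aestronglyMeasurable _
      (ae_of_all _ fun _ => norm_correlation_le μ huC _ _)
  have hdefect : Integrable (fun p : G × G =>
      |correlation u μ p.1 p.2 - correlation u μ (p.1 * p.2⁻¹) 1|) (P.prod P) :=
    (hcorr.sub hcorr').abs
  rw [← add_assoc, integral_integral_inner_mconv_adjointMeasure hu huC,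
    ← integral_add hcorr' hdefect]
  calc ‖∫ g, u g ∂μ‖ ^ 2
      ≤ ‖∫ g, u g ∂(P.mconv μ)‖ ^ 2 + 2 * C * ‖∫ g, u g ∂(P.mconv μ) - ∫ g, u g ∂μ‖ :=
        norm_sq_le_norm_sq_add_of_norm_le (norm_integral_le_of_forall_norm_le huC)
          (norm_integral_le_of_forall_norm_le huC)
    _ ≤ ∫ p, correlation u μ p.1 p.2 ∂(P.prod P)
          + 2 * C * ‖∫ g, u g ∂(P.mconv μ) - ∫ g, u g ∂μ‖ := by
        gcongr; exact norm_integral_mconv_sq_le_integral_correlation hu huC P μ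
    _ ≤ _ := by
        refine add_le_add_left (integral_mono hcorr (hcorr'.add hdefect) fun p => ?_) _
        simp only [Pi.add_apply]
        linarith [le_abs_self (correlation u μ p.1 p.2 - correlation u μ (p.1 * p.2⁻¹) 1)]

end VanDerCorput

theorem van_der_corput_two_sided_general {G : Type*} [Group G] [TopologicalSpace G] [IsTopologicalGroup G]
    [SecondCountableTopology G] [MeasurableSpace G] [BorelSpace G]
    {H : Type*} [NormedAddCommGroup H] [InnerProductSpace ℝ H] [CompleteSpace H]
    (F : ℕ → Measure G) (hF : IsLeftReiter F)
    (u : G → H) (hu : StronglyMeasurable u) (C : ℝ) (huC : ∀ g, ‖u g‖ ≤ C) :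
    ∃ F' : ℕ → Measure G, (∀ n, F' n = (F n).mconv (adjointMeasure (F n))) ∧
      IsLeftReiter F' ∧ IsRightReiter F' ∧
      ∀ n, limsup (fun m => ‖∫ g, u g ∂(F m)‖ ^ 2) atTop ≤
        limsup (fun m => ∫ g, ∫ h, ⟪u g, u (h * g)⟫ ∂(F' n) ∂(F m)) atTop := by
  have := hF.1
  have hF' : IsLeftReiter fun n => (F n).mconv (adjointMeasure (F n)) :=
    hF.mconv_right fun _ => inferInstance
  refine ⟨_, fun _ => rfl, hF',
    hF'.isRightReiter_of_adjointMeasure_eq fun n => adjointMeasure_mconv_adjointMeasure (F n),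
    fun n => limsup_le_limsup_of_le_add ?_ ?_ ?_ fun m =>
      van_der_corput_inequality hu huC (F n) (F m)⟩
  · refine isBoundedUnder_of ⟨C ^ 2, fun m => (le_abs_self _).trans ?_⟩
    exact norm_integral_le_of_forall_norm_le fun g =>
      norm_integral_le_of_forall_norm_le fun h => norm_inner_le_of_forall_norm_le huC _ _
  · exact isBoundedUnder_of ⟨0, fun m => sq_nonneg _⟩ |>.isCoboundedUnder_le
  · simpa using (hF.tendsto_integral_abs_correlation_sub hu huC (F n)).add
      ((hF.tendsto_integral_mconv_sub (F n) hu huC).norm.const_mul (2 * C))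

/-- Van der Corput corollary: there is a two-sided Reiter sequence `F'`
(namely `F'_n = F_n ∗ F_n^*`) such that
`limsup_m ‖∫ u_g dF_m(g)‖² ≤ inf_n limsup_m ∫∫ ⟨u_g, u_{hg}⟩ dF'_n(h) dF_m(g)`. -/
theorem van_der_corput_two_sided {G : Type*} [Group G] [TopologicalSpace G] [IsTopologicalGroup G]
    [LocallyCompactSpace G] [SecondCountableTopology G] [MeasurableSpace G] [BorelSpace G]
    {H : Type*} [NormedAddCommGroup H] [InnerProductSpace ℝ H] [CompleteSpace H]
    (F : ℕ → Measure G) (hF : IsLeftReiter F)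
    (u : G → H) (hu : StronglyMeasurable u) (C : ℝ) (huC : ∀ g, ‖u g‖ ≤ C) :
    ∃ F' : ℕ → Measure G, (∀ n, F' n = (F n).mconv (adjointMeasure (F n))) ∧
      IsLeftReiter F' ∧ IsRightReiter F' ∧
      ∀ n, limsup (fun m => ‖∫ g, u g ∂(F m)‖ ^ 2) atTop ≤
        limsup (fun m => ∫ g, ∫ h, ⟪u g, u (h * g)⟫ ∂(F' n) ∂(F m)) atTop :=
  van_der_corput_two_sided_general F hF u hu C huC
end

section
/- For commuting measure-preserving actions T₁, T₂ of an amenable group G on a probability space (X, μ) with invariant σ-algebras I₁, I₂ and I_{12} (the σ-algebra of sets invariant under the diagonal action g ↦ T₁^g T₂^g), the σ-algebras I₁ and I_{12} are relatively independent over I₁ ∧ I₂: for all f₁ ∈ L^∞(I₁) and f₁₂ ∈ L^∞(I_{12}), E(f₁ f₁₂ | I₁ ∧ I₂) = E(f₁ | I₁ ∧ I₂) E(f₁₂ | I₁ ∧ I₂). In particular E(f₁ f₁₂ | I₁ ∧ I₂) = E(f₁|I₂) E(f₁₂|I₁) when these are I₁∧I₂-measurable. -/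
open MeasureTheory Filter Topology
open scoped symmDiff

/-- A left Følner sequence of finite subsets of a group. -/
def IsFolner {G : Type*} [Group G] [DecidableEq G] (F : ℕ → Finset G) : Prop :=
  (∀ N, (F N).Nonempty) ∧ ∀ g : G,
    Tendsto (fun N => (((((F N).image (fun x => g * x))) ∆ (F N)).card : ℝ) / (F N).card)
      atTop (𝓝 0)

/-- The σ-algebra of sets invariant under an action `T : G → X → X`. -/
def invariantSigma {G X : Type*} [MeasurableSpace X] (T : G → X → X) : MeasurableSpace X where
  MeasurableSet' s := MeasurableSet s ∧ ∀ g, T g ⁻¹' s = s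
  measurableSet_empty := ⟨MeasurableSet.empty, fun g => by simp⟩
  measurableSet_compl s hs := ⟨hs.1.compl, fun g => by
    rw [Set.preimage_compl, hs.2 g]⟩
  measurableSet_iUnion f hf := ⟨MeasurableSet.iUnion (fun n => (hf n).1), fun g => by
    simp only [Set.preimage_iUnion]
    exact Set.iUnion_congr fun n => (hf n).2 g⟩

/-!
Write `I = I₁ ⊓ I₂`. As `f₁₂` is invariant under `T₁^g T₂^g`, `f₁₂ ∘ T₂^g = f₁₂ ∘ T₁^{g⁻¹}`.
Conditioning on `I₁` commutes with every `T₂^g` (the actions commute) and absorbs every `T₁^g`,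
so `E(f₁₂ | I₁)` is a.e. `T₂`-invariant. A group with a Følner sequence is countable, so this
a.e. invariant function has an everywhere invariant version, and `E(f₁₂ | I₁) = E(f₁₂ | I)`;
symmetrically `E(f₁ | I₂) = E(f₁ | I)`. Pulling out `f₁` at level `I₁` and using the tower
property, `E(f₁ f₁₂ | I) = E(f₁ E(f₁₂ | I₁) | I) = E(f₁ E(f₁₂ | I) | I) = E(f₁ | I) E(f₁₂ | I)`.
-/

open Function Set
open scoped Pointwise

namespace IsFolner

variable {G : Type*} [Group G] [DecidableEq G] {F : ℕ → Finset G}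

/-- Otherwise `g • F N` and `F N` are disjoint for every `N`, so the Følner ratio is constantly
`2`. -/
theorem exists_mem_mul_inv (hF : IsFolner F) (g : G) : ∃ N, g ∈ F N * (F N)⁻¹ := by
  by_contra! hg
  have hratio : ∀ N, ((((F N).image (g * ·)) ∆ F N).card : ℝ) / (F N).card = 2 := by
    intro N
    have hdisj : Disjoint ((F N).image (g * ·)) (F N) := by
      refine Finset.disjoint_left.2 fun y hy hyF => ?_
      obtain ⟨x, hx, rfl⟩ := Finset.mem_image.1 hy
      exact hg N (by simpa using Finset.mul_mem_mul hyF (Finset.inv_mem_inv hx))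
    have hpos : (0 : ℝ) < (F N).card := by exact_mod_cast (hF.1 N).card_pos
    rw [hdisj.symmDiff_eq_sup, Finset.sup_eq_union, Finset.card_union_of_disjoint hdisj,
      Finset.card_image_of_injective _ (mul_right_injective g)]
    field_simp
    push_cast
    ring
  have h := hF.2 g
  simp only [hratio] at h
  norm_num [tendsto_const_nhds_iff] at h

theorem countable (hF : IsFolner F) : Countable G :=
  countable_univ_iff.1 <| (countable_iUnion fun N => (F N * (F N)⁻¹).countable_toSet).mono
    fun g _ => mem_iUnion.2 (hF.exists_mem_mul_inv g)

end IsFolner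

structure IsAction {G X : Type*} [Monoid G] (T : G → X → X) : Prop where
  map_mul : ∀ g g' x, T (g * g') x = T g (T g' x)
  map_one : ∀ x, T 1 x = x

namespace IsAction

variable {G X : Type*} [Group G] {T : G → X → X}

theorem leftInverse (hT : IsAction T) (g : G) : LeftInverse (T g⁻¹) (T g) := fun x => by
  rw [← hT.map_mul, inv_mul_cancel, hT.map_one]

theorem preimage_setOf_forall_apply_eq {β : Type*} (hT : IsAction T) (u : X → β) (g : G) :
    T g ⁻¹' {x | ∀ g', u (T g' x) = u x} = {x | ∀ g', u (T g' x) = u x} := by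
  have hfwd : ∀ x g, (∀ g', u (T g' x) = u x) → ∀ g', u (T g' (T g x)) = u (T g x) :=
    fun x g hx g' => by rw [← hT.map_mul, hx, hx]
  ext x
  refine ⟨fun hx => show ∀ g', _ from ?_, hfwd x g⟩
  simpa only [hT.leftInverse g x] using hfwd (T g x) g⁻¹ hx

end IsAction

section InvariantSigma

variable {G X : Type*} [m0 : MeasurableSpace X] {T : G → X → X}

theorem invariantSigma_le (T : G → X → X) : invariantSigma T ≤ m0 := fun _ hs => hs.1

theorem measurable_invariantSigma_iff {β : Type*} [MeasurableSpace β] [MeasurableSingletonClass β]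
    {f : X → β} : Measurable[invariantSigma T] f ↔ Measurable f ∧ ∀ g x, f (T g x) = f x := by
  refine ⟨fun hf => ⟨hf.mono (invariantSigma_le T) le_rfl, fun g x => ?_⟩,
    fun ⟨hf, hinv⟩ s hs => ⟨hf hs, fun g => by ext x; simp [hinv g x]⟩⟩
  have hx : x ∈ T g ⁻¹' (f ⁻¹' {f x}) := by rw [(hf (measurableSet_singleton (f x))).2 g]; rfl
  exact hx

theorem comap_invariantSigma_apply (g : G) : (invariantSigma T).comap (T g) = invariantSigma T := by
  ext s
  refine ⟨?_, fun hs => ⟨s, hs, hs.2 g⟩⟩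
  rintro ⟨t, ht, rfl⟩
  rwa [ht.2 g]

theorem comap_invariantSigma_le_of_commute {S : X → X} (hS : Measurable S)
    (hcomm : ∀ g x, T g (S x) = S (T g x)) : (invariantSigma T).comap S ≤ invariantSigma T := by
  rintro _ ⟨t, ht, rfl⟩
  refine ⟨hS ht.1, fun g => ?_⟩
  rw [← preimage_comp, show S ∘ T g = T g ∘ S from funext fun x => (hcomm g x).symm,
    preimage_comp, ht.2 g]

theorem comap_invariantSigma_eq_of_commute {H : Type*} [Group H] {S : H → X → X}
    (hS : IsAction S) (hSm : ∀ h, Measurable (S h)) (hcomm : ∀ g h x, T g (S h x) = S h (T g x))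
    (h : H) : (invariantSigma T).comap (S h) = invariantSigma T := by
  refine le_antisymm (comap_invariantSigma_le_of_commute (hSm h) (fun g => hcomm g h)) ?_
  calc invariantSigma T = (invariantSigma T).comap (S h⁻¹ ∘ S h) := by
        rw [(hS.leftInverse h).comp_eq_id, MeasurableSpace.comap_id]
    _ = ((invariantSigma T).comap (S h⁻¹)).comap (S h) := MeasurableSpace.comap_comp.symm
    _ ≤ (invariantSigma T).comap (S h) := MeasurableSpace.comap_mono
        (comap_invariantSigma_le_of_commute (hSm h⁻¹) (fun g => hcomm g h⁻¹))

end InvariantSigma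

theorem condExp_comp_ae_eq {X E : Type*} [NormedAddCommGroup E] [NormedSpace ℝ E]
    [CompleteSpace E] {m m0 : MeasurableSpace X} {μ : Measure X} [IsFiniteMeasure μ] (hm : m ≤ m0) {φ : X → X} (hφ : MeasurePreserving φ μ μ)
    (hφm : m.comap φ = m) {f : X → E} (hf : Integrable f μ) :
    μ[f ∘ φ|m] =ᵐ[μ] μ[f|m] ∘ φ := by
  have hsetIntegral : ∀ u : X → E, AEStronglyMeasurable u μ → ∀ t, MeasurableSet[m] t →
      ∫ x in φ ⁻¹' t, u (φ x) ∂μ = ∫ x in t, u x ∂μ := fun u hu t ht => by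
    rw [← setIntegral_map (hm t ht) (by rwa [hφ.map_eq]) hφ.measurable.aemeasurable, hφ.map_eq]
  refine (ae_eq_condExp_of_forall_setIntegral_eq hm (hφ.integrable_comp_of_integrable hf)
    (fun s _ _ => (hφ.integrable_comp_of_integrable integrable_condExp).integrableOn)
    (fun s hs _ => ?_) ?_).symm
  · obtain ⟨t, ht, rfl⟩ : MeasurableSet[m.comap φ] s := by rwa [hφm]
    simp only [comp_apply]
    rw [hsetIntegral _ integrable_condExp.aestronglyMeasurable t ht,
      hsetIntegral _ hf.aestronglyMeasurable t ht, setIntegral_condExp hm hf ht]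
  · exact (stronglyMeasurable_condExp.comp_measurable
      (Measurable.of_comap_le hφm.le)).aestronglyMeasurable

theorem condExp_mul_ae_eq_of_condExp_ae_eq {Ω : Type*} {m m₁ m0 : MeasurableSpace Ω}
    {μ : Measure Ω} [IsFiniteMeasure μ] (hm : m ≤ m₁) (hm₁ : m₁ ≤ m0) {f₁ f₂ : Ω → ℝ} {C : ℝ}
    (hf₁ : StronglyMeasurable[m₁] f₁) (hC : ∀ᵐ x ∂μ, ‖f₁ x‖ ≤ C) (hf₂ : Integrable f₂ μ)
    (h : μ[f₂|m₁] =ᵐ[μ] μ[f₂|m]) : μ[f₁ * f₂|m] =ᵐ[μ] μ[f₁|m] * μ[f₂|m] := by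
  have hf₁m : AEStronglyMeasurable f₁ μ := (hf₁.mono hm₁).aestronglyMeasurable
  calc μ[f₁ * f₂|m] =ᵐ[μ] μ[μ[f₁ * f₂|m₁]|m] := (condExp_condExp_of_le hm hm₁).symm
    _ =ᵐ[μ] μ[f₁ * μ[f₂|m]|m] := condExp_congr_ae <|
        (condExp_stronglyMeasurable_mul_of_bound hm₁ hf₁ hf₂ C hC).trans h.mul_left
    _ =ᵐ[μ] μ[f₁|m] * μ[f₂|m] := condExp_mul_of_stronglyMeasurable_right stronglyMeasurable_condExp
        (integrable_condExp.bdd_mul hf₁m hC) (Integrable.of_bound hf₁m C hC)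

theorem Set.indicator_apply_eq_of_preimage_eq {X β : Type*} [Zero β] {A : Set X} {u : X → β}
    {S : X → X}
    (hA : S ⁻¹' A = A) (hu : ∀ x ∈ A, u (S x) = u x) (x : X) :
    A.indicator u (S x) = A.indicator u x := by
  rw [← indicator_comp_right, hA]
  exact congrFun (indicator_congr hu) x

section CommutingActions

variable {G X : Type*} [Group G] [MeasurableSpace X] {μ : Measure X} {T₁ T₂ : G → X → X}

/-- The version is `u` times the indicator of the set of points along whose `T₂`-orbit `u` is
constant: that set is conull (as `G` is countable) and invariant under both actions. -/
theorem aestronglyMeasurable_inf_of_comp_ae_eq {ι : Type*} {T : ι → X → X} [Countable G]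
    (hT₂ : IsAction T₂) (hT₂m : ∀ g, Measurable (T₂ g))
    (hcomm : ∀ i g x, T i (T₂ g x) = T₂ g (T i x)) {u : X → ℝ}
    (hu : Measurable[invariantSigma T] u) (hu₂ : ∀ g, u ∘ T₂ g =ᵐ[μ] u) :
    AEStronglyMeasurable[invariantSigma T ⊓ invariantSigma T₂] u μ := by
  obtain ⟨hum, huT⟩ := measurable_invariantSigma_iff.1 hu
  set A := {x | ∀ g, u (T₂ g x) = u x}
  have hA₂ : ∀ g, T₂ g ⁻¹' A = A := hT₂.preimage_setOf_forall_apply_eq u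
  have hA : ∀ i, T i ⁻¹' A = A := fun i => by
    simp only [A, preimage_ofPred_eq, ← hcomm, huT]
  have hAm : MeasurableSet A := by
    rw [show A = ⋂ g, {x | u (T₂ g x) = u x} by ext; simp [A]]
    exact .iInter fun g => measurableSet_eq_fun (hum.comp (hT₂m g)) hum
  have hAae : ∀ᵐ x ∂μ, x ∈ A := ae_all_iff.2 hu₂
  refine ⟨A.indicator u, Measurable.stronglyMeasurable fun s hs => ?_,
    by filter_upwards [hAae] with x hx using (indicator_of_mem hx u).symm⟩
  have hmeas := hum.indicator hAm
  exact MeasurableSpace.measurableSet_inf.2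
    ⟨measurable_invariantSigma_iff.2 ⟨hmeas, fun i =>
        indicator_apply_eq_of_preimage_eq (hA i) fun x _ => huT i x⟩ hs,
      measurable_invariantSigma_iff.2 ⟨hmeas, fun g =>
        indicator_apply_eq_of_preimage_eq (hA₂ g) fun x hx => hx g⟩ hs⟩

variable [IsFiniteMeasure μ]

theorem condExp_inf_invariantSigma_ae_eq_of_comp_ae_eq {ι : Type*} {T : ι → X → X} [Countable G]
    (hT₂ : IsAction T₂) (hT₂m : ∀ g, Measurable (T₂ g))
    (hcomm : ∀ i g x, T i (T₂ g x) = T₂ g (T i x)) {f : X → ℝ}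
    (hf : ∀ g, μ[f|invariantSigma T] ∘ T₂ g =ᵐ[μ] μ[f|invariantSigma T]) :
    μ[f|invariantSigma T ⊓ invariantSigma T₂] =ᵐ[μ] μ[f|invariantSigma T] :=
  (condExp_condExp_of_le inf_le_left (invariantSigma_le T)).symm.trans <|
    condExp_of_aestronglyMeasurable' (inf_le_left.trans (invariantSigma_le T))
      (aestronglyMeasurable_inf_of_comp_ae_eq hT₂ hT₂m hcomm
        stronglyMeasurable_condExp.measurable hf) integrable_condExp

theorem condExp_invariantSigma_comp_ae_eq_of_commute (hT₂ : IsAction T₂)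
    (hT₂μ : ∀ g, MeasurePreserving (T₂ g) μ μ) (hcomm : ∀ g h x, T₁ g (T₂ h x) = T₂ h (T₁ g x))
    {f : X → ℝ} (hf : Integrable f μ) (h : G) :
    μ[f ∘ T₂ h|invariantSigma T₁] =ᵐ[μ] μ[f|invariantSigma T₁] ∘ T₂ h :=
  condExp_comp_ae_eq (invariantSigma_le T₁) (hT₂μ h)
    (comap_invariantSigma_eq_of_commute hT₂ (fun g => (hT₂μ g).measurable) hcomm h) hf

theorem condExp_inf_invariantSigma_ae_eq_of_invariant [Countable G] (hT₁ : IsAction T₁)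
    (hT₁μ : ∀ g, MeasurePreserving (T₁ g) μ μ) (hcomm : ∀ g h x, T₁ g (T₂ h x) = T₂ h (T₁ g x))
    {f : X → ℝ} (hf : Measurable[invariantSigma T₁] f) (hfi : Integrable f μ) :
    μ[f|invariantSigma T₁ ⊓ invariantSigma T₂] =ᵐ[μ] μ[f|invariantSigma T₂] := by
  have hcomm' : ∀ g h x, T₂ g (T₁ h x) = T₁ h (T₂ g x) := fun g h x => (hcomm h g x).symm
  rw [inf_comm]
  refine condExp_inf_invariantSigma_ae_eq_of_comp_ae_eq hT₁ (fun g => (hT₁μ g).measurable)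
    hcomm' fun g => ?_
  simpa only [show f ∘ T₁ g = f from funext ((measurable_invariantSigma_iff.1 hf).2 g)] using
    (condExp_invariantSigma_comp_ae_eq_of_commute hT₁ hT₁μ hcomm' hfi g).symm

theorem condExp_inf_invariantSigma_ae_eq_of_diag [Countable G] (hT₂ : IsAction T₂)
    (hT₁μ : ∀ g, MeasurePreserving (T₁ g) μ μ) (hT₂μ : ∀ g, MeasurePreserving (T₂ g) μ μ)
    (hcomm : ∀ g h x, T₁ g (T₂ h x) = T₂ h (T₁ g x)) {f : X → ℝ}
    (hf : Measurable[invariantSigma fun g x => T₁ g (T₂ g x)] f) (hfi : Integrable f μ) :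
    μ[f|invariantSigma T₁ ⊓ invariantSigma T₂] =ᵐ[μ] μ[f|invariantSigma T₁] := by
  refine condExp_inf_invariantSigma_ae_eq_of_comp_ae_eq hT₂ (fun g => (hT₂μ g).measurable)
    hcomm fun g => ?_
  have hdiag : f ∘ T₂ g = f ∘ T₁ g⁻¹ := funext fun x => by
    simpa only [comp_apply, hT₂.leftInverse g x] using
      ((measurable_invariantSigma_iff.1 hf).2 g⁻¹ (T₂ g x)).symm
  calc μ[f|invariantSigma T₁] ∘ T₂ g
      =ᵐ[μ] μ[f ∘ T₂ g|invariantSigma T₁] :=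
        (condExp_invariantSigma_comp_ae_eq_of_commute hT₂ hT₂μ hcomm hfi g).symm
    _ = μ[f ∘ T₁ g⁻¹|invariantSigma T₁] := by rw [hdiag]
    _ =ᵐ[μ] μ[f|invariantSigma T₁] ∘ T₁ g⁻¹ :=
        condExp_comp_ae_eq (invariantSigma_le T₁) (hT₁μ g⁻¹) (comap_invariantSigma_apply g⁻¹) hfi
    _ = μ[f|invariantSigma T₁] :=
        funext ((measurable_invariantSigma_iff.1 stronglyMeasurable_condExp.measurable).2 g⁻¹)

end CommutingActions

/-- For commuting measure-preserving actions `T₁, T₂` of an amenable group, the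
invariant σ-algebra `I₁` of `T₁` and the invariant σ-algebra `I₁₂` of the diagonal
action `g ↦ T₁^g T₂^g` are relatively independent over `I₁ ⊓ I₂`:
`E(f₁ f₁₂ | I₁ ⊓ I₂) = E(f₁ | I₁ ⊓ I₂) E(f₁₂ | I₁ ⊓ I₂)` a.e.; moreover this equals
`E(f₁|I₂) E(f₁₂|I₁)` a.e. -/
theorem invariant_sigma_diag_rel_indep {G : Type*} [Group G] [DecidableEq G]
    (hamen : ∃ F : ℕ → Finset G, IsFolner F)
    {X : Type*} [MeasurableSpace X] (μ : Measure X) [IsProbabilityMeasure μ]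
    (T₁ T₂ : G → X → X)
    (h1 : ∀ g, MeasurePreserving (T₁ g) μ μ) (h2 : ∀ g, MeasurePreserving (T₂ g) μ μ)
    (hact1 : ∀ g g' x, T₁ (g * g') x = T₁ g (T₁ g' x))
    (hact2 : ∀ g g' x, T₂ (g * g') x = T₂ g (T₂ g' x))
    (hid1 : ∀ x, T₁ 1 x = x) (hid2 : ∀ x, T₂ 1 x = x)
    (hcomm : ∀ g g' x, T₁ g (T₂ g' x) = T₂ g' (T₁ g x))
    (f₁ f₁₂ : X → ℝ)
    (hf₁ : Measurable[invariantSigma T₁] f₁)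
    (hf₁₂ : Measurable[invariantSigma (fun g x => T₁ g (T₂ g x))] f₁₂)
    (hb₁ : ∃ C, ∀ x, |f₁ x| ≤ C) (hb₁₂ : ∃ C, ∀ x, |f₁₂ x| ≤ C) :
    (MeasureTheory.condExp (invariantSigma T₁ ⊓ invariantSigma T₂) μ (fun x => f₁ x * f₁₂ x)
      =ᵐ[μ] fun x =>
        (MeasureTheory.condExp (invariantSigma T₁ ⊓ invariantSigma T₂) μ f₁ x) *
        (MeasureTheory.condExp (invariantSigma T₁ ⊓ invariantSigma T₂) μ f₁₂ x)) ∧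
    (MeasureTheory.condExp (invariantSigma T₁ ⊓ invariantSigma T₂) μ (fun x => f₁ x * f₁₂ x)
      =ᵐ[μ] fun x =>
        (MeasureTheory.condExp (invariantSigma T₂) μ f₁ x) *
        (MeasureTheory.condExp (invariantSigma T₁) μ f₁₂ x)) := by
  obtain ⟨F, hF⟩ := hamen
  have := hF.countable
  have hT₁ : IsAction T₁ := ⟨hact1, hid1⟩
  have hT₂ : IsAction T₂ := ⟨hact2, hid2⟩
  have hintegrable : ∀ {f : X → ℝ}, Measurable f → (∃ C, ∀ x, |f x| ≤ C) → Integrable f μ :=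
    fun hf ⟨C, hC⟩ => .of_bound hf.aestronglyMeasurable C (.of_forall hC)
  have hf₁i := hintegrable (hf₁.mono (invariantSigma_le _) le_rfl) hb₁
  have hf₁₂i := hintegrable (hf₁₂.mono (invariantSigma_le _) le_rfl) hb₁₂
  have hC₁ := condExp_inf_invariantSigma_ae_eq_of_invariant hT₁ h1 hcomm hf₁ hf₁i
  have hC₁₂ := condExp_inf_invariantSigma_ae_eq_of_diag hT₂ h1 h2 hcomm hf₁₂ hf₁₂i
  obtain ⟨C, hC⟩ := hb₁
  have hrel := condExp_mul_ae_eq_of_condExp_ae_eq inf_le_left (invariantSigma_le T₁)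
    hf₁.stronglyMeasurable (.of_forall hC) hf₁₂i hC₁₂.symm
  exact ⟨hrel, hrel.trans (hC₁.mul hC₁₂)⟩
end
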